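/- Assume as hypothesis: for every A ⊆ ℕ with d̄(A) + d̲(A) > 1 there exist an infinite B ⊆ ℕ and t ∈ ℕ with B + B + t ⊆ A. Let ℕ = C₁ ∪ C₂ be a partition such that no Cᵢ contains B + B + t for any infinite B ⊆ ℕ and t ∈ ℕ. Then d̄(C₁) + d̲(C₁) = 1, d̄(C₂) + d̲(C₂) = 1, d̄(C₁) = d̄(C₂), and d̲(C₁) = d̲(C₂). -/
import Mathlib

open Filter
open scoped Classical

noncomputable def countIn (A : Set ℕ) (N : ℕ) : ℕ :=
  ((Finset.Icc 1 N).filter (fun n => n ∈ A)).card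

noncomputable def upperDensity (A : Set ℕ) : ℝ :=
  limsup (fun N => (countIn A N : ℝ) / N) atTop

noncomputable def lowerDensity (A : Set ℕ) : ℝ :=
  liminf (fun N => (countIn A N : ℝ) / N) atTop

def hasDensity (A : Set ℕ) (d : ℝ) : Prop :=
  Tendsto (fun N => (countIn A N : ℝ) / N) atTop (nhds d)

lemma countIn_nonneg_div (A : Set ℕ) (N : ℕ) : 0 ≤ (countIn A N : ℝ) / N := by
  positivity

lemma countIn_div_le_one (A : Set ℕ) (N : ℕ) : (countIn A N : ℝ) / N ≤ 1 := by
  rcases Nat.eq_zero_or_pos N with rfl | hN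
  · simp
  · rw [div_le_one (by exact_mod_cast hN)]
    have : countIn A N ≤ N := by
      calc countIn A N ≤ (Finset.Icc 1 N).card := Finset.card_filter_le _ _
        _ = N := by simp
    exact_mod_cast this

lemma bddabove (A : Set ℕ) : IsBoundedUnder (· ≤ ·) atTop (fun N => (countIn A N : ℝ) / N) :=
  isBoundedUnder_of ⟨1, fun N => countIn_div_le_one A N⟩

lemma bddbelow (A : Set ℕ) : IsBoundedUnder (· ≥ ·) atTop (fun N => (countIn A N : ℝ) / N) :=
  isBoundedUnder_of ⟨0, fun N => countIn_nonneg_div A N⟩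

theorem two_coloring_density_constraints
    (h : ∀ A : Set ℕ, 1 < upperDensity A + lowerDensity A →
      ∃ (B : Set ℕ) (t : ℕ), B.Infinite ∧ ∀ b₁ ∈ B, ∀ b₂ ∈ B, b₁ + b₂ + t ∈ A)
    (C₁ C₂ : Set ℕ) (hunion : C₁ ∪ C₂ = Set.univ) (hdisj : Disjoint C₁ C₂)
    (h1 : ¬ ∃ (B : Set ℕ) (t : ℕ), B.Infinite ∧ ∀ b₁ ∈ B, ∀ b₂ ∈ B, b₁ + b₂ + t ∈ C₁)
    (h2 : ¬ ∃ (B : Set ℕ) (t : ℕ), B.Infinite ∧ ∀ b₁ ∈ B, ∀ b₂ ∈ B, b₁ + b₂ + t ∈ C₂) :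
    upperDensity C₁ + lowerDensity C₁ = 1 ∧
    upperDensity C₂ + lowerDensity C₂ = 1 ∧
    upperDensity C₁ = upperDensity C₂ ∧
    lowerDensity C₁ = lowerDensity C₂ := by
  have hle1 : upperDensity C₁ + lowerDensity C₁ ≤ 1 := by
    by_contra hc; exact h1 (h C₁ (lt_of_not_ge hc))
  have hle2 : upperDensity C₂ + lowerDensity C₂ ≤ 1 := by
    by_contra hc; exact h2 (h C₂ (lt_of_not_ge hc))
  -- complement relation
  have hcount : ∀ N : ℕ, countIn C₁ N + countIn C₂ N = N := by
    intro N
    unfold countIn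
    rw [← Finset.card_union_of_disjoint]
    · rw [← Finset.filter_or]
      have : ∀ n : ℕ, n ∈ C₁ ∨ n ∈ C₂ := by
        intro n
        have := hunion ▸ Set.mem_univ n
        exact this
      rw [Finset.filter_true_of_mem (fun n _ => this n)]
      simp
    · apply Finset.disjoint_filter_filter'
      exact hdisj
  have heq : (fun N => (countIn C₂ N : ℝ) / N) =ᶠ[atTop] (fun N => 1 - (countIn C₁ N : ℝ) / N) := by
    filter_upwards [eventually_gt_atTop 0] with N hN
    have hN' : (N : ℝ) ≠ 0 := by exact_mod_cast hN.ne'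
    have hc : (countIn C₁ N : ℝ) + countIn C₂ N = N := by exact_mod_cast hcount N
    field_simp
    linarith
  have hup : upperDensity C₂ = 1 - lowerDensity C₁ := by
    unfold upperDensity lowerDensity
    rw [limsup_congr heq]
    exact limsup_const_sub atTop _ 1 (bddabove C₁).isCoboundedUnder_ge (bddbelow C₁)
  have hlo : lowerDensity C₂ = 1 - upperDensity C₁ := by
    unfold upperDensity lowerDensity
    rw [liminf_congr heq]
    exact liminf_const_sub atTop _ 1 (bddabove C₁) (bddbelow C₁).isCoboundedUnder_le
  have hge : 1 ≤ upperDensity C₁ + lowerDensity C₁ := by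
    have := hle2
    rw [hup, hlo] at this
    linarith
  have e1 : upperDensity C₁ + lowerDensity C₁ = 1 := le_antisymm hle1 hge
  refine ⟨e1, by rw [hup, hlo]; linarith, by rw [hup]; linarith, by rw [hlo]; linarith⟩
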